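/- arXiv:2301.11643 — 5 statements merged into one kernel-verified Lean document; each statement's English description precedes it below -/
import Mathlib

section
/- Let R be a commutative ring and P ∈ R[t] a polynomial with constant coefficient P(0) = 1. Then there exist a natural number n and an n×n matrix A over R such that det(1_n − t·A) = P as polynomials in R[t] (the determinant of the matrix over R[t] whose entries are those of the identity matrix minus t times the entries of A). -/
open Polynomial

/-- For a commutative ring `R` and a polynomial `P ∈ R[t]` with constant coefficient
`P(0) = 1`, there exist `n : ℕ` and an `n × n` matrix `A` over `R` such that
`det (1 - t • A) = P` in `R[t]`. -/
theorem exists_matrix_det_one_sub_smul_eq (R : Type*) [CommRing R]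
    (P : Polynomial R) (hP : P.coeff 0 = 1) :
    ∃ (n : ℕ) (A : Matrix (Fin n) (Fin n) R),
      Matrix.det ((1 : Matrix (Fin n) (Fin n) (Polynomial R)) -
        (X : Polynomial R) • A.map (C : R →+* Polynomial R)) = P := by
  rcases Nat.eq_zero_or_pos P.natDegree with h0 | hn
  · refine ⟨0, 0, ?_⟩
    rw [Matrix.det_fin_zero, P.eq_C_of_natDegree_eq_zero h0, hP, map_one]
  · set n := P.natDegree with hdef
    set A : Matrix (Fin n) (Fin n) R := fun i j =>
      if (i : ℕ) = 0 then -P.coeff (j + 1) else if (j : ℕ) + 1 = i then 1 else 0 with hA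
    set M : Matrix (Fin n) (Fin n) (Polynomial R) :=
      (1 : Matrix (Fin n) (Fin n) (Polynomial R)) - (X : Polynomial R) • A.map C with hM
    set U : Matrix (Fin n) (Fin n) (Polynomial R) := fun j k =>
      if (k : ℕ) ≤ j then X ^ ((j : ℕ) - k) else 0 with hU
    refine ⟨n, A, ?_⟩
    -- basic entry formula for M * U
    have hMU : ∀ i k : Fin n, (M * U) i k =
        U i k - X * ∑ j, C (A i j) * U j k := by
      intro i k
      simp only [Matrix.mul_apply, hM, Matrix.sub_apply, Matrix.smul_apply, Matrix.map_apply,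
        Matrix.one_apply, sub_mul, smul_eq_mul, Finset.sum_sub_distrib, Finset.mul_sum]
      congr 1
      · rw [Finset.sum_eq_single i]
        · simp
        · intro b _ hb; simp [Ne.symm hb]
        · simp
      · congr 1; ext j; ring_nf
    -- U has determinant 1
    have hUdet : U.det = 1 := by
      have : U.BlockTriangular OrderDual.toDual := by
        intro i j hij
        have h2 : ¬ ((j : ℕ) ≤ (i : ℕ)) := not_le.2 hij
        exact if_neg h2
      rw [Matrix.det_of_lowerTriangular U this]
      have : ∀ i : Fin n, U i i = 1 := by intro i; simp [hU]
      simp [this]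
    -- the product is upper triangular
    have htri : (M * U).BlockTriangular id := by
      intro i k hki
      replace hki : (k : ℕ) < (i : ℕ) := hki
      have hi0 : (i : ℕ) ≠ 0 := by omega
      rw [hMU]
      have hsum : ∑ j, C (A i j) * U j k = U ⟨(i : ℕ) - 1, lt_trans (Nat.pred_lt hi0) i.2⟩ k := by
        rw [Finset.sum_eq_single (⟨(i : ℕ) - 1, lt_trans (Nat.pred_lt hi0) i.2⟩ : Fin n)]
        · have : ((i : ℕ) - 1) + 1 = (i : ℕ) := Nat.succ_pred_eq_of_pos (Nat.pos_of_ne_zero hi0)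
          simp [hA, hi0, this]
        · intro b _ hb
          have : ¬ ((b : ℕ) + 1 = (i : ℕ)) := by
            intro hcontra
            apply hb
            apply Fin.ext
            simp [← hcontra]
          simp [hA, hi0, this]
        · simp
      rw [hsum]
      have hk1 : (k : ℕ) ≤ (i : ℕ) - 1 := Nat.le_pred_of_lt hki
      have hk2 : (k : ℕ) ≤ (i : ℕ) := le_of_lt hki
      have e1 : U ⟨(i : ℕ) - 1, lt_trans (Nat.pred_lt hi0) i.2⟩ k
          = X ^ ((i : ℕ) - 1 - (k : ℕ)) := if_pos hk1
      have e2 : U i k = X ^ ((i : ℕ) - (k : ℕ)) := if_pos hk2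
      rw [e1, e2]
      have hexp : (i : ℕ) - (k : ℕ) = ((i : ℕ) - 1 - (k : ℕ)) + 1 := by omega
      rw [hexp, pow_succ' X ((i : ℕ) - 1 - (k : ℕ)), sub_self]
    -- diagonal entries
    have hzero : (0 : ℕ) < n := hn
    have hdiag0 : (M * U) ⟨0, hzero⟩ ⟨0, hzero⟩ = P := by
      rw [hMU]
      have hU00 : U ⟨0, hzero⟩ ⟨0, hzero⟩ = 1 := by simp [hU]
      have hsum : ∑ j, C (A ⟨0, hzero⟩ j) * U j ⟨0, hzero⟩ =
          ∑ j : Fin n, -(C (P.coeff ((j : ℕ) + 1)) * X ^ (j : ℕ)) := by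
        apply Finset.sum_congr rfl
        intro j _
        have h1 : A ⟨0, hzero⟩ j = -P.coeff ((j : ℕ) + 1) := if_pos rfl
        have h2 : U j ⟨0, hzero⟩ = X ^ ((j : ℕ) - 0) := if_pos (Nat.zero_le _)
        rw [Nat.sub_zero] at h2
        rw [h1, h2, map_neg]
        ring
      rw [hU00, hsum]
      rw [Finset.sum_neg_distrib]
      rw [Fin.sum_univ_eq_sum_range (fun j => C (P.coeff (j + 1)) * X ^ j) n]
      rw [mul_neg, sub_neg_eq_add]
      conv_rhs => rw [P.as_sum_range_C_mul_X_pow]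
      rw [Finset.sum_range_succ' (fun i => C (P.coeff i) * X ^ i) n]
      rw [hP, map_one, pow_zero, mul_one, Finset.mul_sum, add_comm]
      congr 1
      apply Finset.sum_congr rfl
      intro j _
      ring
    have hdiag : ∀ i : Fin n, (i : ℕ) ≠ 0 → (M * U) i i = 1 := by
      intro i hi0
      rw [hMU]
      have hsum : ∑ j, C (A i j) * U j i = U ⟨(i : ℕ) - 1, lt_trans (Nat.pred_lt hi0) i.2⟩ i := by
        rw [Finset.sum_eq_single (⟨(i : ℕ) - 1, lt_trans (Nat.pred_lt hi0) i.2⟩ : Fin n)]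
        · have : ((i : ℕ) - 1) + 1 = (i : ℕ) := Nat.succ_pred_eq_of_pos (Nat.pos_of_ne_zero hi0)
          simp [hA, hi0, this]
        · intro b _ hb
          have : ¬ ((b : ℕ) + 1 = (i : ℕ)) := by
            intro hcontra
            apply hb
            apply Fin.ext
            simp [← hcontra]
          simp [hA, hi0, this]
        · simp
      have : ¬ ((i : ℕ) ≤ (i : ℕ) - 1) := by omega
      have hz : U ⟨(i : ℕ) - 1, lt_trans (Nat.pred_lt hi0) i.2⟩ i = 0 := if_neg this
      have hone : U i i = X ^ ((i : ℕ) - (i : ℕ)) := if_pos le_rfl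
      rw [hsum, hz, mul_zero, sub_zero, hone, Nat.sub_self, pow_zero]
    -- conclude
    have : M.det * U.det = (M * U).det := (Matrix.det_mul M U).symm
    rw [hUdet, mul_one] at this
    rw [← hM, this, Matrix.det_of_upperTriangular htri]
    rw [Finset.prod_eq_single (⟨0, hzero⟩ : Fin n)]
    · exact hdiag0
    · intro b _ hb
      exact hdiag b (by simpa [Fin.ext_iff] using hb)
    · simp
end

section
/- Let f be a nonzero rational function in one variable over ℂ (an element of RatFunc ℂ), with coprime numerator num f and denominator denom f. For a ∈ ℂ set ord_a(f) = rootMultiplicity a (num f) − rootMultiplicity a (denom f) ∈ ℤ, and set ord_∞(f) = natDegree (denom f) − natDegree (num f) ∈ ℤ. Then ∑_{a ∈ ℂ} ord_a(f) + ord_∞(f) = 0, the sum over a ∈ ℂ having only finitely many nonzero terms. -/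
open Polynomial

lemma aux_support_subset (P : Polynomial ℂ) (hP : P ≠ 0) :
    (Function.support fun a : ℂ => (P.rootMultiplicity a : ℤ)) ⊆ ↑P.roots.toFinset := by
  intro a ha
  simp only [Function.mem_support, ne_eq, Nat.cast_eq_zero] at ha
  simp only [Finset.mem_coe, Multiset.mem_toFinset, mem_roots hP, IsRoot]
  exact (rootMultiplicity_pos hP).1 (Nat.pos_of_ne_zero ha)

lemma aux_support_finite (P : Polynomial ℂ) :
    (Function.support fun a : ℂ => (P.rootMultiplicity a : ℤ)).Finite := by
  rcases eq_or_ne P 0 with rfl | hP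
  · simp [rootMultiplicity_zero]
  · exact Set.Finite.subset P.roots.toFinset.finite_toSet (aux_support_subset P hP)

lemma aux_finsum (P : Polynomial ℂ) (hP : P ≠ 0) :
    ∑ᶠ a : ℂ, (P.rootMultiplicity a : ℤ) = P.natDegree := by
  rw [finsum_eq_finset_sum_of_support_subset _ (aux_support_subset P hP)]
  have : ∑ a ∈ P.roots.toFinset, (P.rootMultiplicity a : ℤ)
      = ((∑ a ∈ P.roots.toFinset, P.roots.count a : ℕ) : ℤ) := by
    push_cast
    refine Finset.sum_congr rfl fun a _ => ?_
    rw [count_roots]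
  rw [this, Multiset.toFinset_sum_count_eq,
    (splits_iff_card_roots.1 (IsAlgClosed.splits P))]

/-- The divisor of a nonzero rational function on `ℙ¹(ℂ)` has total degree zero:
for `f ∈ ℂ(t)`, `f ≠ 0`, the sum over `a ∈ ℂ` of
`ord_a f = rootMultiplicity a (num f) - rootMultiplicity a (denom f)` plus the order
at infinity `natDegree (denom f) - natDegree (num f)` vanishes. -/
theorem ratFunc_sum_ord_eq_zero (f : RatFunc ℂ) (hf : f ≠ 0) :
    (∑ᶠ a : ℂ, (((f.num.rootMultiplicity a : ℤ)) - (f.denom.rootMultiplicity a : ℤ)))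
      + ((f.denom.natDegree : ℤ) - (f.num.natDegree : ℤ)) = 0 := by
  have hnum : f.num ≠ 0 := RatFunc.num_ne_zero hf
  have hden : f.denom ≠ 0 := f.denom_ne_zero
  rw [finsum_sub_distrib (aux_support_finite f.num) (aux_support_finite f.denom),
    aux_finsum _ hnum, aux_finsum _ hden]
  ring
end

section
/- Let K be a number field with [K : ℚ] > 1 (i.e. 1 < Module.finrank ℚ K). Then there exists a prime number p such that (p : ℤ) divides the discriminant NumberField.discr K of K; in particular some prime ramifies in K, so the field ℚ admits no nontrivial everywhere-unramified extension (Minkowski's theorem). -/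
/-- **Minkowski's theorem** (in the form: some prime ramifies): if `K` is a number
field with `[K : ℚ] > 1`, then some prime number `p` divides the discriminant of `K`. -/
theorem exists_prime_dvd_discr (K : Type*) [Field K] [NumberField K]
    (h : 1 < Module.finrank ℚ K) :
    ∃ p : ℕ, p.Prime ∧ (p : ℤ) ∣ NumberField.discr K := by
  have h2 := NumberField.abs_discr_gt_two h
  have hne : (NumberField.discr K).natAbs ≠ 1 := by
    intro h1
    rw [Int.abs_eq_natAbs, h1] at h2
    norm_num at h2
  obtain ⟨p, hp, hdvd⟩ := Int.exists_prime_and_dvd hne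
  exact ⟨p.natAbs, Int.prime_iff_natAbs_prime.mp hp,
    (Int.natAbs_dvd).mpr hdvd⟩
end

section
/- Let p be a prime number, let F̄_p = AlgebraicClosure (ZMod p), and let G = (F̄_p ≃ₐ[ZMod p] F̄_p) be the absolute Galois group of F_p, equipped with the Krull topology. The Frobenius map x ↦ x^p is an element Frob of G (it is a ring automorphism since F̄_p is a perfect field of characteristic p, and it fixes ZMod p pointwise), and the topological closure of the subgroup of G generated by Frob equals all of G; i.e. the absolute Galois group of F_p is topologically generated by the Frobenius automorphism. -/
/-- The absolute Galois group of `𝔽_p` is topologically generated by the Frobenius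
automorphism `x ↦ x ^ p`: there is an element `Frob` of
`Gal(F̄_p / F_p) = (AlgebraicClosure (ZMod p) ≃ₐ[ZMod p] AlgebraicClosure (ZMod p))`
(with the Krull topology) acting by `x ↦ x ^ p`, and the topological closure of the
subgroup it generates is the whole group. -/
theorem frobenius_topologically_generates (p : ℕ) [Fact p.Prime] :
    ∃ Frob : AlgebraicClosure (ZMod p) ≃ₐ[ZMod p] AlgebraicClosure (ZMod p),
      (∀ x, Frob x = x ^ p) ∧
      (Subgroup.zpowers Frob).topologicalClosure = ⊤ := by
  classical
  set L := AlgebraicClosure (ZMod p) with hL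
  have hp1 : 1 < p := (Fact.out : p.Prime).one_lt
  let Frob : L ≃ₐ[ZMod p] L := AlgEquiv.ofRingEquiv (f := frobeniusEquiv L p)
    (fun x => by rw [frobeniusEquiv_def, ← map_pow, ZMod.pow_card])
  have hFrob : ∀ x : L, Frob x = x ^ p := fun x => rfl
  refine ⟨Frob, hFrob, ?_⟩
  rw [eq_top_iff]
  intro σ _
  show σ ∈ closure (Subgroup.zpowers Frob : Set (L ≃ₐ[ZMod p] L))
  rw [mem_closure_iff_nhds_one]
  intro U hU
  rw [krullTopology_mem_nhds_one_iff] at hU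
  obtain ⟨E, hfin, hE⟩ := hU
  -- pass to the normal closure of E
  set F := IntermediateField.normalClosure (ZMod p) E L with hF
  haveI : FiniteDimensional (ZMod p) F := normalClosure.is_finiteDimensional _ _ _
  haveI : Normal (ZMod p) F := normalClosure.normal _ _ _
  haveI : Finite F := Module.finite_of_finite (ZMod p)
  haveI : Fintype F := Fintype.ofFinite F
  haveI : IsGalois (ZMod p) F := ⟨⟩
  set m := Module.finrank (ZMod p) F with hm
  have hm0 : 0 < m := Module.finrank_pos
  have hcardF : Fintype.card F = p ^ m := by
    rw [Module.card_eq_pow_finrank (K := ZMod p), ZMod.card]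
  -- the restricted Frobenius
  set g : F ≃ₐ[ZMod p] F := AlgEquiv.restrictNormalHom F Frob with hg
  have hres : ∀ (τ : L ≃ₐ[ZMod p] L) (x : F),
      τ (x : L) = ((AlgEquiv.restrictNormalHom F τ) x : L) :=
    fun τ x => (AlgEquiv.restrictNormalHom_apply F τ x).symm
  have hgdef : ∀ x : F, g x = x ^ p := by
    intro x
    apply Subtype.ext
    push_cast
    exact ((hres Frob x).symm.trans (hFrob _))
  have hgpow : ∀ (k : ℕ) (x : F), (g ^ k) x = x ^ p ^ k := by
    intro k
    induction k with
    | zero => intro x; simp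
    | succ n ih =>
      intro x
      rw [pow_succ, AlgEquiv.mul_apply, hgdef, ih, ← pow_mul, pow_succ, mul_comm (p ^ n) p]
  -- the order of g is m
  have hcardG : Nat.card (F ≃ₐ[ZMod p] F) = m := by
    rw [IsGalois.card_aut_eq_finrank]
  have hd : orderOf g = m := by
    have hdvd : orderOf g ∣ m := hcardG ▸ orderOf_dvd_natCard g
    have hd0 : 0 < orderOf g := orderOf_pos g
    have h1 : ∀ x : F, x ^ p ^ orderOf g = x := by
      intro x
      rw [← hgpow, pow_orderOf_eq_one g, AlgEquiv.one_apply]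
    have h2 : ∀ u : Fˣ, u ^ (p ^ orderOf g - 1) = 1 := by
      intro u
      have hu : u ^ p ^ orderOf g = u := Units.ext (by push_cast [h1]; rfl)
      have hge : 1 ≤ p ^ orderOf g := Nat.one_le_pow _ _ (Fact.out : p.Prime).pos
      rw [← Nat.sub_add_cancel hge, pow_succ] at hu
      exact mul_right_cancel (b := u) (by rw [hu, one_mul])
    have h3 : Fintype.card F - 1 ∣ p ^ orderOf g - 1 :=
      (FiniteField.forall_pow_eq_one_iff F (p ^ orderOf g - 1)).mp h2
    rw [hcardF] at h3
    have hlt : 1 < p ^ orderOf g := Nat.one_lt_pow hd0.ne' hp1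
    have hle : p ^ m - 1 ≤ p ^ orderOf g - 1 :=
      Nat.le_of_dvd (Nat.sub_pos_of_lt hlt) h3
    have hmd : m ≤ orderOf g := by
      have h4 : p ^ m ≤ p ^ orderOf g :=
        (tsub_le_tsub_iff_right hlt.le).mp hle
      exact (Nat.pow_le_pow_iff_right hp1).mp h4
    exact le_antisymm (Nat.le_of_dvd hm0 hdvd) hmd
  -- hence g generates the whole finite Galois group
  have htop : Subgroup.zpowers g = ⊤ := by
    apply Subgroup.eq_top_of_card_eq
    rw [Nat.card_zpowers, hd, hcardG]
  obtain ⟨n, hn⟩ : σ.restrictNormal F ∈ Subgroup.zpowers g := by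
    rw [htop]; trivial
  refine ⟨Frob ^ n, ⟨n, rfl⟩, ?_⟩
  apply hE
  rw [SetLike.mem_coe, IntermediateField.mem_fixingSubgroup_iff]
  intro x hx
  have hxF : x ∈ F := IntermediateField.le_normalClosure E hx
  set x' : F := ⟨x, hxF⟩ with hx'
  have hinv : σ⁻¹ x = ((AlgEquiv.restrictNormalHom F σ⁻¹) x' : L) := hres σ⁻¹ x'
  show (Frob ^ n / σ) x = x
  rw [div_eq_mul_inv, AlgEquiv.mul_apply]
  show (Frob ^ n) (σ⁻¹ x) = x
  have hn' : (AlgEquiv.restrictNormalHom F Frob) ^ n = σ.restrictNormal F := hn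
  rw [hinv, hres (Frob ^ n) _, map_zpow, hn']
  have : (σ.restrictNormal F) ((AlgEquiv.restrictNormalHom F σ⁻¹) x')
      = ((AlgEquiv.restrictNormalHom F σ) * (AlgEquiv.restrictNormalHom F σ⁻¹)) x' := rfl
  rw [this, ← map_mul, mul_inv_cancel, map_one, AlgEquiv.one_apply]
end

section
/- The fundamental group of the circle is isomorphic to ℤ: for the unit circle Circle = {z ∈ ℂ : |z| = 1} with basepoint 1, there is a group isomorphism FundamentalGroup Circle 1 ≃* Multiplicative ℤ. -/
open Real Set

namespace CircleDeg

/-- `ee t = exp (2 π i t)`, the degree-one covering `ℝ → Circle`. -/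
noncomputable def ee (t : ℝ) : Circle := Circle.exp (2 * π * t)

lemma continuous_ee : Continuous ee :=
  Circle.exp.continuous.comp (continuous_const.mul continuous_id)

@[simp] lemma ee_zero : ee 0 = 1 := by simp [ee]

lemma ee_add (s t : ℝ) : ee (s + t) = ee s * ee t := by
  simp [ee, mul_add, Circle.exp_add]

lemma ee_sub (s t : ℝ) : ee (s - t) = ee s / ee t := by
  simp [ee, mul_sub, Circle.exp_sub]

@[simp] lemma ee_int (n : ℤ) : ee n = 1 := by
  simpa [ee, mul_comm] using Circle.exp_two_pi_mul_int n

lemma ee_eq_one {t : ℝ} : ee t = 1 ↔ ∃ n : ℤ, t = n := by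
  rw [ee, Circle.exp_eq_one]
  constructor
  · rintro ⟨n, hn⟩
    refine ⟨n, ?_⟩
    have hπ : (0:ℝ) < π := Real.pi_pos
    have : 2 * π * t = 2 * π * n := by rw [hn]; ring
    exact mul_left_cancel₀ (by positivity) this
  · rintro ⟨n, rfl⟩
    exact ⟨n, by ring⟩

lemma ee_sum (m : ℕ) (f : ℕ → ℝ) :
    ee (∑ k ∈ Finset.range m, f k) = ∏ k ∈ Finset.range m, ee (f k) := by
  induction m with
  | zero => simp
  | succ n ih => rw [Finset.sum_range_succ, Finset.prod_range_succ, ee_add, ih]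

/-- partial argument: the normalized angle from `w` to `z`. -/
noncomputable def pa (z w : Circle) : ℝ := Complex.arg ((z : ℂ) / w) / (2 * π)

lemma ee_pa (z w : Circle) : ee (pa z w) = z / w := by
  have hπ : (2 * π) ≠ 0 := by positivity
  have : 2 * π * (Complex.arg ((z : ℂ) / w) / (2 * π)) = Complex.arg ((z : ℂ) / w) := by
    field_simp
  rw [ee, pa, this, ← Circle.coe_div]
  exact Circle.exp_arg _

@[simp] lemma pa_self (z : Circle) : pa z z = 0 := by
  simp [pa, div_self (Circle.coe_ne_zero z)]

lemma mem_slitPlane_of_dist_lt {z w : Circle} (h : dist z w < 2) :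
    ((z : ℂ) / w) ∈ Complex.slitPlane := by
  by_contra hs
  rw [Complex.mem_slitPlane_iff] at hs
  push_neg at hs
  obtain ⟨hre, him⟩ := hs
  have habs : ‖((z : ℂ) / w)‖ = 1 := by
    rw [norm_div, Circle.norm_coe, Circle.norm_coe, div_one]
  have : ((z : ℂ) / w) = -1 := by
    have h1 : ((z : ℂ) / w).re = -1 := by
      rw [Complex.norm_def, Complex.normSq_apply, him] at habs
      nlinarith [Real.sq_sqrt (by nlinarith [mul_self_nonneg (((z:ℂ)/w).re)] : (0:ℝ) ≤ ((z:ℂ)/w).re * ((z:ℂ)/w).re + 0 * 0),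
        Real.sqrt_nonneg (((z:ℂ)/w).re * ((z:ℂ)/w).re + 0 * 0)]
    exact Complex.ext (by simpa using h1) (by simpa using him)
  have hzw : (z : ℂ) = -w := by
    field_simp at this
    linear_combination this
  change dist (z:ℂ) (w:ℂ) < 2 at h
  rw [Complex.dist_eq, hzw, show -(w:ℂ) - w = (-2) * w by ring, norm_mul] at h
  simp [Circle.norm_coe] at h

lemma continuous_pa {X : Type*} [TopologicalSpace X] {u v : X → Circle}
    (hu : Continuous u) (hv : Continuous v) (h : ∀ x, dist (u x) (v x) < 2) :
    Continuous fun x => pa (u x) (v x) := by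
  have : Continuous fun x => Complex.arg ((u x : ℂ) / v x) := by
    rw [continuous_iff_continuousAt]
    intro x
    have h1 : ContinuousAt (fun y : X => (u y : ℂ) / v y) x :=
      (((continuous_subtype_val.comp hu).div (continuous_subtype_val.comp hv)
        (fun y => Circle.coe_ne_zero (v y))).continuousAt)
    exact ContinuousAt.comp (x := x) (g := Complex.arg)
      (Complex.continuousAt_arg (mem_slitPlane_of_dist_lt (h x))) h1
  exact this.div_const _

lemma abs_min_sub_min (y a b : ℝ) : |min y a - min y b| ≤ |a - b| := by
  have := lipschitzWith_min.dist_le_mul (y, a) (y, b)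
  simpa [Real.dist_eq, Prod.dist_eq, abs_sub_comm] using this

lemma key_lift {F : ℝ × ℝ → Circle} (hUC : UniformContinuous F)
    {g₀ : ℝ → ℝ} (hg₀ : Continuous g₀) (hbase : ∀ x, ee (g₀ x) = F (x, 0)) :
    ∃ G : ℝ × ℝ → ℝ, Continuous G ∧ (∀ x, G (x, 0) = g₀ x) ∧
      ∀ x y, y ∈ Icc (0:ℝ) 1 → ee (G (x, y)) = F (x, y) := by
  have hF : Continuous F := hUC.continuous
  obtain ⟨δ, hδpos, hδ⟩ := Metric.uniformContinuous_iff.mp hUC 2 two_pos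
  obtain ⟨m, hm⟩ := exists_nat_one_div_lt hδpos
  set M : ℕ := m + 1 with hM
  have hMpos : (0:ℝ) < (M:ℝ) := by positivity
  have hMδ : 1 / (M:ℝ) < δ := by
    have : ((M:ℝ)) = (m:ℝ) + 1 := by push_cast [hM]; ring
    rw [this]; exact hm
  have key : ∀ (x y : ℝ) (k : ℕ),
      dist (F (x, min y (((k:ℝ)+1)/M))) (F (x, min y ((k:ℝ)/M))) < 2 := by
    intro x y k
    apply hδ
    rw [Prod.dist_eq]
    refine max_lt (by simpa using hδpos) ?_
    rw [Real.dist_eq]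
    calc |min y (((k:ℝ)+1)/M) - min y ((k:ℝ)/M)| ≤ |((k:ℝ)+1)/M - (k:ℝ)/M| :=
          abs_min_sub_min _ _ _
      _ = 1 / M := by
          rw [div_sub_div_same, add_sub_cancel_left, abs_of_pos (by positivity)]
      _ < δ := hMδ
  refine ⟨fun p => g₀ p.1 + ∑ k ∈ Finset.range M,
      pa (F (p.1, min p.2 (((k:ℝ)+1)/M))) (F (p.1, min p.2 ((k:ℝ)/M))), ?_, ?_, ?_⟩
  · refine (hg₀.comp continuous_fst).add (continuous_finset_sum _ fun k _ => ?_)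
    exact continuous_pa
      (hF.comp (continuous_fst.prodMk (continuous_snd.min continuous_const)))
      (hF.comp (continuous_fst.prodMk (continuous_snd.min continuous_const)))
      (fun p => key p.1 p.2 k)
  · intro x
    have h0 : ∀ c : ℝ, 0 ≤ c → min (0:ℝ) c = 0 := fun c hc => min_eq_left hc
    simp only [add_eq_left]
    refine Finset.sum_eq_zero fun k _ => ?_
    rw [h0 _ (by positivity), h0 _ (by positivity), pa_self]
  · intro x y hy
    set f : ℕ → Circle := fun k => F (x, min y ((k:ℝ)/M)) with hf
    have hterm : ∀ k ∈ Finset.range M,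
        ee (pa (F (x, min y (((k:ℝ)+1)/M))) (F (x, min y ((k:ℝ)/M)))) = f (k+1) / f k := by
      intro k _
      rw [ee_pa, hf]
      push_cast
      rfl
    rw [ee_add, ee_sum, Finset.prod_congr rfl hterm, Finset.prod_range_div, hbase]
    have hfM : f M = F (x, y) := by
      rw [hf]; simp only
      rw [div_self hMpos.ne', min_eq_left hy.2]
    have hf0 : f 0 = F (x, 0) := by
      rw [hf]; simp only [Nat.cast_zero, zero_div]
      rw [min_eq_right hy.1]
    rw [hfM, hf0]
    exact mul_div_cancel _ _

lemma int_valued_const {d : ℝ → ℝ} (hd : Continuous d)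
    (hint : ∀ y ∈ Icc (0:ℝ) 1, ∃ n : ℤ, d y = n) (h0 : d 0 = 0) : d 1 = 0 := by
  by_contra hne
  obtain ⟨c, hc⟩ := hint 1 ⟨zero_le_one, le_refl 1⟩
  have hcne : c ≠ 0 := by rintro rfl; exact hne (by exact_mod_cast hc)
  have half : ∃ y ∈ Icc (0:ℝ) 1, d y = 1/2 ∨ d y = -(1/2) := by
    rcases lt_or_gt_of_ne hcne with hneg | hpos
    · have hle : (c:ℝ) ≤ -1 := by exact_mod_cast Int.le_of_lt_add_one (by omega : c < -1 + 1)
      have : (-(1/2) : ℝ) ∈ Icc (d 1) (d 0) := by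
        rw [h0, hc]; constructor <;> linarith
      obtain ⟨y, hy, hdy⟩ := intermediate_value_Icc' zero_le_one hd.continuousOn this
      exact ⟨y, hy, Or.inr hdy⟩
    · have hge : (1:ℝ) ≤ c := by exact_mod_cast hpos
      have : ((1/2) : ℝ) ∈ Icc (d 0) (d 1) := by
        rw [h0, hc]; constructor <;> linarith
      obtain ⟨y, hy, hdy⟩ := intermediate_value_Icc zero_le_one hd.continuousOn this
      exact ⟨y, hy, Or.inl hdy⟩
  obtain ⟨y, hy, hdy⟩ := half
  obtain ⟨n, hn⟩ := hint y hy
  rcases hdy with h | h <;> rw [hn] at h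
  · have : (2*n : ℝ) = 1 := by linarith
    have : (2*n : ℤ) = 1 := by exact_mod_cast this
    omega
  · have : (2*n : ℝ) = -1 := by linarith
    have : (2*n : ℤ) = -1 := by exact_mod_cast this
    omega

lemma lift_unique {f : ℝ → Circle} {g₁ g₂ : ℝ → ℝ} (h₁ : Continuous g₁) (h₂ : Continuous g₂)
    (he₁ : ∀ y ∈ Icc (0:ℝ) 1, ee (g₁ y) = f y) (he₂ : ∀ y ∈ Icc (0:ℝ) 1, ee (g₂ y) = f y)
    (h0 : g₁ 0 = g₂ 0) : g₁ 1 = g₂ 1 := by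
  have : (g₁ - g₂) 1 = 0 := by
    apply int_valued_const (h₁.sub h₂)
    · intro y hy
      have : ee (g₁ y - g₂ y) = 1 := by
        rw [ee_sub, he₁ y hy, he₂ y hy, div_self']
      exact ee_eq_one.mp this
    · simp [h0]
  simpa [sub_eq_zero] using this

/-- `g` is a lift of the loop `γ` starting at `0`. -/
def IsLift (γ : Path (1:Circle) 1) (g : ℝ → ℝ) : Prop :=
  Continuous g ∧ g 0 = 0 ∧ ∀ y ∈ Icc (0:ℝ) 1, ee (g y) = γ.extend y

lemma exists_lift (γ : Path (1:Circle) 1) : ∃ g, IsLift γ g := by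
  have hUCe : UniformContinuous γ.extend := by
    have h1 : UniformContinuous (γ : C(unitInterval, Circle)) :=
      CompactSpace.uniformContinuous_of_continuous γ.continuous
    have h2 : UniformContinuous (Set.projIcc (0:ℝ) 1 zero_le_one) :=
      (LipschitzWith.projIcc zero_le_one).uniformContinuous
    exact h1.comp h2
  have hUC : UniformContinuous (fun p : ℝ × ℝ => γ.extend p.2) :=
    hUCe.comp uniformContinuous_snd
  obtain ⟨G, hGc, hG0, hGe⟩ := key_lift hUC continuous_const
    (g₀ := fun _ => 0) (fun x => by simp [γ.extend_zero])
  exact ⟨fun y => G (0, y), (hGc.comp (continuous_const.prodMk continuous_id)),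
    hG0 0, fun y hy => hGe 0 y hy⟩

lemma isLift_one_int {γ : Path (1:Circle) 1} {g : ℝ → ℝ} (hg : IsLift γ g) :
    ∃ n : ℤ, g 1 = n := by
  apply ee_eq_one.mp
  rw [hg.2.2 1 ⟨zero_le_one, le_refl 1⟩, γ.extend_one]

lemma isLift_unique {γ : Path (1:Circle) 1} {g₁ g₂ : ℝ → ℝ}
    (h₁ : IsLift γ g₁) (h₂ : IsLift γ g₂) : g₁ 1 = g₂ 1 :=
  lift_unique h₁.1 h₂.1 h₁.2.2 h₂.2.2 (h₁.2.1.trans h₂.2.1.symm)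

/-- The degree of a loop in the circle. -/
noncomputable def deg (γ : Path (1:Circle) 1) : ℤ :=
  (isLift_one_int (Classical.choose_spec (exists_lift γ))).choose

lemma deg_spec (γ : Path (1:Circle) 1) {g : ℝ → ℝ} (hg : IsLift γ g) :
    g 1 = (deg γ : ℝ) := by
  rw [isLift_unique hg (Classical.choose_spec (exists_lift γ))]
  exact (isLift_one_int (Classical.choose_spec (exists_lift γ))).choose_spec

open unitInterval in
lemma deg_eq_of_homotopic {γ₀ γ₁ : Path (1:Circle) 1} (h : γ₀.Homotopic γ₁) :
    deg γ₀ = deg γ₁ := by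
  obtain ⟨H⟩ := h
  set pj : ℝ → unitInterval := Set.projIcc (0:ℝ) 1 zero_le_one with hpj
  have hpjUC : UniformContinuous pj := (LipschitzWith.projIcc zero_le_one).uniformContinuous
  set F : ℝ × ℝ → Circle := fun p => H (pj p.1, pj p.2) with hF
  have hUC : UniformContinuous F := by
    refine (CompactSpace.uniformContinuous_of_continuous H.continuous).comp ?_
    exact (hpjUC.comp uniformContinuous_fst).prodMk (hpjUC.comp uniformContinuous_snd)
  have hbase : ∀ x : ℝ, ee ((fun _ => (0:ℝ)) x) = F (x, 0) := by
    intro x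
    have h0 : pj 0 = 0 := by rw [hpj]; simp [Set.projIcc_left]
    rw [hF]
    simp only [ee_zero, h0]
    rw [H.eq_fst _ (Or.inl rfl)]
    simp
  obtain ⟨G, hGc, hG0, hGe⟩ := key_lift hUC continuous_const hbase
  have h0 : pj 0 = 0 := by rw [hpj]; simp [Set.projIcc_left]
  have h1 : pj 1 = 1 := by rw [hpj]; simp [Set.projIcc_right]
  -- the two lifts of γ₀ and γ₁
  have hl₀ : IsLift γ₀ (fun y => G (0, y)) := by
    refine ⟨hGc.comp (continuous_const.prodMk continuous_id), hG0 0, fun y hy => ?_⟩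
    rw [hGe 0 y hy, hF]
    simp only [h0]
    rw [show H ((0 : unitInterval), pj y) = γ₀ (pj y) from H.map_zero_left (pj y)]
    rfl
  have hl₁ : IsLift γ₁ (fun y => G (1, y)) := by
    refine ⟨hGc.comp (continuous_const.prodMk continuous_id), hG0 1, fun y hy => ?_⟩
    rw [hGe 1 y hy, hF]
    simp only [h1]
    rw [show H ((1 : unitInterval), pj y) = γ₁ (pj y) from H.map_one_left (pj y)]
    rfl
  -- the top edge is constant
  have htop : G (1, 1) = G (0, 1) := by
    have := lift_unique (f := fun _ => 1)
      (g₁ := fun x => G (x, 1)) (g₂ := fun _ => G (0, 1))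
      (hGc.comp (continuous_id.prodMk continuous_const)) continuous_const
      (fun x hx => by
        rw [hGe x 1 ⟨zero_le_one, le_refl 1⟩, hF]
        simp only [h1]
        rw [H.eq_fst _ (Or.inr rfl)]
        simp)
      (fun x hx => by
        rw [hGe 0 1 ⟨zero_le_one, le_refl 1⟩, hF]
        simp only [h1]
        rw [H.eq_fst _ (Or.inr rfl)]
        simp)
      rfl
    exact this
  have e₀ := deg_spec γ₀ hl₀
  have e₁ := deg_spec γ₁ hl₁
  have : (deg γ₀ : ℝ) = deg γ₁ := by rw [← e₀, ← e₁, htop]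
  exact_mod_cast this

lemma extend_trans {x y z : Circle} (γ : Path x y) (δ : Path y z) {t : ℝ}
    (ht : t ∈ Icc (0:ℝ) 1) :
    (γ.trans δ).extend t = if t ≤ 1/2 then γ.extend (2*t) else δ.extend (2*t - 1) := by
  rw [Path.extend_apply _ ht, Path.trans_apply]
  split_ifs with h
  · rw [Path.extend_apply γ (by constructor <;> [linarith [ht.1]; linarith])]
  · rw [Path.extend_apply δ (by constructor <;> [linarith; linarith [ht.2]])]

set_option maxHeartbeats 1000000 in
lemma deg_trans (γ δ : Path (1:Circle) 1) : deg (γ.trans δ) = deg γ + deg δ := by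
  obtain ⟨g, hg⟩ := exists_lift γ
  obtain ⟨h, hh⟩ := exists_lift δ
  have hg1 : g 1 = (deg γ : ℝ) := deg_spec γ hg
  have hh1 : h 1 = (deg δ : ℝ) := deg_spec δ hh
  have hkc : Continuous fun y : ℝ =>
      if y ≤ 1/2 then g (2*y) else (deg γ : ℝ) + h (2*y - 1) := by
    refine Continuous.if_le ?_ ?_ continuous_id continuous_const ?_
    · exact hg.1.comp (continuous_const.mul continuous_id)
    · exact continuous_const.add (hh.1.comp ((continuous_const.mul continuous_id).sub
        continuous_const))
    · intro y hy
      rw [hy]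
      norm_num [hg1, hh.2.1]
  have hlift : IsLift (γ.trans δ)
      (fun y : ℝ => if y ≤ 1/2 then g (2*y) else (deg γ : ℝ) + h (2*y - 1)) := by
    refine ⟨hkc, by norm_num [hg.2.1], fun y hy => ?_⟩
    simp only
    rw [extend_trans γ δ hy]
    by_cases hle : y ≤ 1/2
    · rw [if_pos hle, if_pos hle]
      exact hg.2.2 (2*y) ⟨by linarith [hy.1], by linarith⟩
    · rw [if_neg hle, if_neg hle, ee_add, ee_int, one_mul]
      have := lt_of_not_ge hle
      exact hh.2.2 (2*y - 1) ⟨by linarith, by linarith [hy.2]⟩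
  have h2 := deg_spec _ hlift
  rw [if_neg (by norm_num : ¬ (1:ℝ) ≤ 1/2)] at h2
  norm_num [hh1] at h2
  exact_mod_cast h2.symm

/-- The standard loop of degree `n`. -/
noncomputable def ω (n : ℤ) : Path (1:Circle) 1 where
  toFun t := ee (n * t)
  continuous_toFun := continuous_ee.comp (continuous_const.mul continuous_subtype_val)
  source' := by simp
  target' := by simpa using ee_int n

lemma isLift_ω (n : ℤ) : IsLift (ω n) (fun y => n * y) := by
  refine ⟨continuous_const.mul continuous_id, by simp, fun y hy => ?_⟩
  rw [Path.extend_apply _ hy]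
  rfl

lemma deg_ω (n : ℤ) : deg (ω n) = n := by
  have := deg_spec _ (isLift_ω n)
  simp only [mul_one] at this
  exact_mod_cast this.symm

open unitInterval in
lemma homotopic_omega_deg (γ : Path (1:Circle) 1) : γ.Homotopic (ω (deg γ)) := by
  obtain ⟨g, hg⟩ := exists_lift γ
  have hg1 : g 1 = (deg γ : ℝ) := deg_spec γ hg
  set n : ℤ := deg γ with hn
  refine ⟨{ toFun := fun q => ee ((1 - (q.1:ℝ)) * g q.2 + (q.1:ℝ) * (n * q.2)),
            continuous_toFun := ?_, map_zero_left := ?_, map_one_left := ?_, prop' := ?_ }⟩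
  · apply continuous_ee.comp
    have h1 : Continuous fun q : I × I => (q.1 : ℝ) :=
      continuous_subtype_val.comp continuous_fst
    have h2 : Continuous fun q : I × I => (q.2 : ℝ) :=
      continuous_subtype_val.comp continuous_snd
    exact ((continuous_const.sub h1).mul (hg.1.comp h2)).add
      (h1.mul (continuous_const.mul h2))
  · intro t
    simp only [Icc.coe_zero, sub_zero, one_mul, zero_mul, add_zero]
    have := hg.2.2 (t : ℝ) ⟨t.2.1, t.2.2⟩
    rw [this, Path.extend_apply _ ⟨t.2.1, t.2.2⟩]
    simp
  · intro t
    simp only [Icc.coe_one, sub_self, zero_mul, one_mul, zero_add]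
    rfl
  · intro t x hx
    rcases hx with h | h
    · subst h
      simp only [ContinuousMap.coe_mk, Path.coe_toContinuousMap, Icc.coe_zero, mul_zero,
        add_zero, hg.2.1, zero_mul]
      simp [hg.2.1]
    · simp only [Set.mem_singleton_iff] at h
      subst h
      simp only [ContinuousMap.coe_mk, Path.coe_toContinuousMap, Icc.coe_one, mul_one, hg1]
      have heq : (1 - (t:ℝ)) * (n:ℝ) + (t:ℝ) * (n:ℝ) = (n:ℝ) := by ring
      rw [heq, ee_int]
      symm
      simpa using γ.target'

attribute [local instance] Path.Homotopic.setoid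

/-- Degree descends to homotopy classes. -/
noncomputable def degQ : Path.Homotopic.Quotient (1:Circle) 1 → ℤ :=
  Quotient.lift deg fun _ _ h => deg_eq_of_homotopic h

@[simp] lemma degQ_mk (γ : Path (1:Circle) 1) : degQ ⟦γ⟧ = deg γ := rfl

lemma degQ_comp (P Q : Path.Homotopic.Quotient (1:Circle) 1) :
    degQ (Path.Homotopic.Quotient.trans P Q) = degQ P + degQ Q := by
  induction P using Quotient.inductionOn with
  | h a =>
    induction Q using Quotient.inductionOn with
    | h b =>
      exact deg_trans a b

lemma degQ_omega (n : ℤ) : degQ ⟦ω n⟧ = n := (degQ_mk _).trans (deg_ω n)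

lemma omega_degQ (P : Path.Homotopic.Quotient (1:Circle) 1) : ⟦ω (degQ P)⟧ = P := by
  induction P using Quotient.inductionOn with
  | h a => exact Quotient.sound (Path.Homotopic.equivalence.symm (homotopic_omega_deg a))

end CircleDeg

open CategoryTheory in
/-- The fundamental group of the circle is `ℤ`. -/
theorem fundamentalGroup_circle_equiv_int' :
    Nonempty (FundamentalGroup Circle 1 ≃* Multiplicative ℤ) := by
  refine ⟨{ toFun := fun p => Multiplicative.ofAdd (CircleDeg.degQ (FundamentalGroup.toPath p)),
            invFun := fun n => FundamentalGroup.fromPath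
              (Path.Homotopic.Quotient.mk (CircleDeg.ω n.toAdd)),
            left_inv := ?_, right_inv := ?_, map_mul' := ?_ }⟩
  · intro p
    exact CircleDeg.omega_degQ p
  · intro n
    exact congrArg Multiplicative.ofAdd (CircleDeg.degQ_omega n.toAdd)
  · intro p q
    show Multiplicative.ofAdd (CircleDeg.degQ (Path.Homotopic.Quotient.trans q p))
      = Multiplicative.ofAdd (CircleDeg.degQ p) * Multiplicative.ofAdd (CircleDeg.degQ q)
    rw [CircleDeg.degQ_comp, ← ofAdd_add, add_comm]

/-- The fundamental group of the circle is `ℤ`: there is a group isomorphism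
between the fundamental group of the unit circle in `ℂ` based at `1` and
`Multiplicative ℤ`. -/
theorem fundamentalGroup_circle_equiv_int :
    Nonempty (FundamentalGroup Circle 1 ≃* Multiplicative ℤ) := by
  exact fundamentalGroup_circle_equiv_int'
end
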